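/- arXiv:1203.1368 — 2 statements merged into one kernel-verified Lean document; each statement's English description precedes it below -/
import Mathlib

section
/- Let B be a standard one-dimensional Brownian motion. There is a universal constant C > 0 such that for all 0 ≤ u < r < t, P(B_r < B_u < B_t) ≤ C √(t − r)/√(r − u); in fact one may take C = 1/(2π). -/
open MeasureTheory ProbabilityTheory Filter Real Set

/-- `B` is a standard one-dimensional Brownian motion (indexed by nonnegative times)
under the probability measure `P`. -/
def IsStdBrownianMotion {Ω : Type*} [MeasurableSpace Ω] (P : Measure Ω)
    (B : ℝ → Ω → ℝ) : Prop :=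
  (∀ ω, Continuous fun t => B t ω) ∧
  (∀ ω, B 0 ω = 0) ∧
  (∀ t, Measurable (B t)) ∧
  (∀ (n : ℕ) (t : ℕ → ℝ), 0 ≤ t 0 → (∀ i, t i ≤ t (i + 1)) →
    iIndepFun
      (fun i : Fin n => fun ω => B (t (i + 1)) ω - B (t i) ω) P) ∧
  (∀ s t : ℝ, 0 ≤ s → s ≤ t →
    Measure.map (fun ω => B t ω - B s ω) P = gaussianReal 0 (Real.toNNReal (t - s)))


open scoped ENNReal NNReal Topology

/-! With `Y = B r - B u ~ N(0, r - u)` and `Z = B t - B r ~ N(0, t - r)` independent, the event is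
`-Z < Y < 0`. Given `Z = z`, this is an interval of length `z⁺` for `Y`, whose density is at most
`1 / √(2π(r - u))`; integrating over `Z` gives the bound `E[Z⁺] / √(2π(r - u))`, and
`E[Z⁺] = √(t - r) / √(2π)`. -/

lemma gaussianPDFReal_le_inv_sqrt (μ : ℝ) (v : ℝ≥0) (x : ℝ) :
    gaussianPDFReal μ v x ≤ (√(2 * π * v))⁻¹ := by
  refine mul_le_of_le_one_right (by positivity) (exp_le_one_iff.mpr ?_)
  exact div_nonpos_of_nonpos_of_nonneg (neg_nonpos.mpr (sq_nonneg _)) (by positivity)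

lemma gaussianReal_apply_le_mul_volume (μ : ℝ) {v : ℝ≥0} (hv : v ≠ 0) (s : Set ℝ) :
    gaussianReal μ v s ≤ ENNReal.ofReal (√(2 * π * v))⁻¹ * volume s := by
  rw [gaussianReal_apply μ hv, ← setLIntegral_const]
  exact lintegral_mono fun x => ENNReal.ofReal_le_ofReal (gaussianPDFReal_le_inv_sqrt μ v x)

lemma integral_Ioi_mul_exp_neg_mul_sq {b : ℝ} (hb : 0 < b) :
    ∫ x in Ioi 0, x * rexp (-b * x ^ 2) = (2 * b)⁻¹ := by
  have hderiv : ∀ x, HasDerivAt (fun x => -rexp (-b * x ^ 2) / (2 * b))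
      (x * rexp (-b * x ^ 2)) x := by
    intro x
    refine (((hasDerivAt_pow 2 x).const_mul (-b)).exp.neg.div_const (2 * b)).congr_deriv ?_
    field_simp
    ring
  have hlim : Tendsto (fun x => -rexp (-b * x ^ 2) / (2 * b)) atTop (𝓝 0) := by
    have hsq : Tendsto (fun x : ℝ => -b * x ^ 2) atTop atBot :=
      (tendsto_pow_atTop two_ne_zero).const_mul_atTop_of_neg (neg_lt_zero.mpr hb)
    simpa using (tendsto_exp_atBot.comp hsq).neg.div_const (2 * b)
  rw [integral_Ioi_of_hasDerivAt_of_tendsto' (fun x _ => hderiv x)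
    (integrable_mul_exp_neg_mul_sq hb).integrableOn hlim]
  simp [neg_div, mul_comm]

lemma lintegral_ofReal_gaussianReal_zero {v : ℝ≥0} (hv : v ≠ 0) :
    ∫⁻ x, ENNReal.ofReal x ∂gaussianReal 0 v = ENNReal.ofReal (√v / √(2 * π)) := by
  have hv' : (0 : ℝ) < v := by positivity
  set f : ℝ → ℝ := fun x => (√(2 * π * v))⁻¹ * (x * rexp (-(2 * (v : ℝ))⁻¹ * x ^ 2))
  have hdensity : ∀ x, gaussianPDF 0 v x * ENNReal.ofReal x
      = (Ioi 0).indicator (fun x => ENNReal.ofReal (f x)) x := by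
    intro x
    rw [gaussianPDF, ← ENNReal.ofReal_mul (gaussianPDFReal_nonneg _ _ _)]
    by_cases hx : 0 < x
    · rw [indicator_of_mem (mem_Ioi.mpr hx)]
      congr 1
      simp only [f, gaussianPDFReal, sub_zero]
      field_simp
    · rw [indicator_of_notMem (notMem_Ioi.mpr (not_lt.mp hx)), ENNReal.ofReal_of_nonpos]
      exact mul_nonpos_of_nonneg_of_nonpos (gaussianPDFReal_nonneg _ _ _) (not_lt.mp hx)
  have hf : IntegrableOn f (Ioi 0) :=
    ((integrable_mul_exp_neg_mul_sq (by positivity)).const_mul _).integrableOn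
  rw [gaussianReal_of_var_ne_zero 0 hv,
    lintegral_withDensity_eq_lintegral_mul _ (measurable_gaussianPDF 0 v) ENNReal.measurable_ofReal]
  simp only [Pi.mul_apply, hdensity]
  rw [lintegral_indicator measurableSet_Ioi, ← ofReal_integral_eq_lintegral_ofReal hf
    (ae_restrict_of_forall_mem measurableSet_Ioi fun x hx =>
      mul_nonneg (by positivity) (mul_nonneg (le_of_lt hx) (exp_pos _).le))]
  congr 1
  rw [integral_const_mul, integral_Ioi_mul_exp_neg_mul_sq (by positivity), sqrt_mul' _ hv'.le]
  field_simp
  exact (sq_sqrt hv'.le).symm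

lemma measure_mem_Ioo_neg_zero_le {Ω : Type*} [MeasurableSpace Ω] {P : Measure Ω}
    [IsFiniteMeasure P] {Y Z : Ω → ℝ} (hY : Measurable Y) (hZ : Measurable Z)
    (hYZ : IndepFun Y Z P) {μ : ℝ} {v : ℝ≥0} (hv : v ≠ 0) (hYlaw : P.map Y = gaussianReal μ v) :
    P {ω | Y ω ∈ Ioo (-Z ω) 0}
      ≤ ENNReal.ofReal (√(2 * π * v))⁻¹ * ∫⁻ z, ENNReal.ofReal z ∂P.map Z := by
  set S : Set (ℝ × ℝ) := {p | p.1 ∈ Ioo (-p.2) 0}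
  have hS : MeasurableSet S :=
    (measurableSet_lt measurable_snd.neg measurable_fst).inter
      (measurableSet_lt measurable_fst measurable_const)
  have hjoint : P.map (fun ω => (Y ω, Z ω)) = (P.map Y).prod (P.map Z) :=
    (indepFun_iff_map_prod_eq_prod_map_map hY.aemeasurable hZ.aemeasurable).mp hYZ
  calc P {ω | Y ω ∈ Ioo (-Z ω) 0}
      = (P.map Y).prod (P.map Z) S := by
        rw [← hjoint, Measure.map_apply (hY.prodMk hZ) hS]
        rfl
    _ = ∫⁻ z, P.map Y (Ioo (-z) 0) ∂P.map Z := Measure.prod_apply_symm hS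
    _ ≤ ∫⁻ z, ENNReal.ofReal (√(2 * π * v))⁻¹ * ENNReal.ofReal z ∂P.map Z := by
        refine lintegral_mono fun z => ?_
        rw [hYlaw]
        simpa using gaussianReal_apply_le_mul_volume μ hv (Ioo (-z) 0)
    _ = ENNReal.ofReal (√(2 * π * v))⁻¹ * ∫⁻ z, ENNReal.ofReal z ∂P.map Z :=
        lintegral_const_mul _ ENNReal.measurable_ofReal

lemma IsStdBrownianMotion.indepFun_sub_sub {Ω : Type*} [MeasurableSpace Ω] {P : Measure Ω}
    {B : ℝ → Ω → ℝ} (hB : IsStdBrownianMotion P B) {u r t : ℝ} (hu : 0 ≤ u) (hur : u ≤ r)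
    (hrt : r ≤ t) :
    IndepFun (fun ω => B r ω - B u ω) (fun ω => B t ω - B r ω) P := by
  set τ : ℕ → ℝ := fun n => if n = 0 then u else if n = 1 then r else t
  have hτ : ∀ i, τ i ≤ τ (i + 1) := by
    rintro (_ | _ | n) <;> simp [τ] <;> linarith
  simpa [τ] using (hB.2.2.2.1 2 τ hu hτ).indepFun (i := 0) (j := 1) (by decide)

theorem stmt8 {Ω : Type*} [MeasurableSpace Ω] (P : Measure Ω) [IsProbabilityMeasure P]
    (B : ℝ → Ω → ℝ) (hB : IsStdBrownianMotion P B) :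
    ∃ C : ℝ, 0 < C ∧ C = 1 / (2 * Real.pi) ∧
      ∀ u r t : ℝ, 0 ≤ u → u < r → r < t →
        (P {ω | B r ω < B u ω ∧ B u ω < B t ω}).toReal
          ≤ C * Real.sqrt (t - r) / Real.sqrt (r - u) := by
  refine ⟨1 / (2 * π), by positivity, rfl, fun u r t hu hur hrt => ?_⟩
  have hv : (r - u).toNNReal ≠ 0 := by simpa using hur
  obtain ⟨-, -, hmeas, -, hlaw⟩ := id hB
  have hbound := measure_mem_Ioo_neg_zero_le (Y := fun ω => B r ω - B u ω)
    (Z := fun ω => B t ω - B r ω) ((hmeas r).sub (hmeas u)) ((hmeas t).sub (hmeas r))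
    (hB.indepFun_sub_sub hu hur.le hrt.le) hv (hlaw u r hu hur.le)
  rw [hlaw r t (hu.trans hur.le) hrt.le, lintegral_ofReal_gaussianReal_zero (by simpa using hrt),
    ← ENNReal.ofReal_mul (by positivity)] at hbound
  have hevent : {ω | B r ω < B u ω ∧ B u ω < B t ω}
      = {ω | B r ω - B u ω ∈ Ioo (-(B t ω - B r ω)) 0} := by
    ext ω
    simp only [mem_ofPred_eq, mem_Ioo]
    constructor <;> rintro ⟨h1, h2⟩ <;> constructor <;> linarith
  rw [hevent]
  refine ENNReal.toReal_le_of_le_ofReal (by positivity) (hbound.trans_eq ?_)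
  congr 1
  rw [Real.coe_toNNReal _ (sub_pos.mpr hur).le, Real.coe_toNNReal _ (sub_pos.mpr hrt).le,
    sqrt_mul (by positivity)]
  field_simp
  rw [sq_sqrt (by positivity)]
end

section
/- Let B be a standard one-dimensional Brownian motion. Then for all 0 ≤ u < s < r and all δ, δ' > 0, E[p_δ(B_r − B_s) · p_{δ'}(B_r − B_u)] = (2π)^{−1} [(δ + r − s)(δ' + s − u) + δ(r − s)]^{−1/2}. -/
open MeasureTheory ProbabilityTheory Filter Real Set

/-- The Gaussian kernel `p_ε(x) = (2πε)^{-1/2} exp(-x²/(2ε))`. -/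
noncomputable def gaussKer (ε : ℝ) (x : ℝ) : ℝ :=
  (Real.sqrt (2 * Real.pi * ε))⁻¹ * Real.exp (-x ^ 2 / (2 * ε))

/-! The increments `X = B_r - B_s` and `Y = B_s - B_u` are independent centred
Gaussians of variances `r - s` and `s - u`, and `B_r - B_u = X + Y`. Integrating out `Y` by the
semigroup property `p_c * p_d = p_{c+d}` leaves `∫ p_{r-s} p_δ p_{δ'+s-u}`, and the product of
Gaussian kernels at a common point is again a Gaussian kernel up to the factor `p_{c+e}(0)`. -/

@[fun_prop]
lemma continuous_gaussKer (ε : ℝ) : Continuous (gaussKer ε) := by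
  unfold gaussKer; fun_prop

-- For `ε ≤ 0` both sides vanish, since `√(2πε) = 0` and `0⁻¹ = 0`.
lemma gaussKer_eq_gaussianPDFReal (ε : ℝ) : gaussKer ε = gaussianPDFReal 0 ε.toNNReal := by
  funext x
  rcases le_or_gt 0 ε with hε | hε
  · simp [gaussKer, gaussianPDFReal, Real.coe_toNNReal _ hε]
  · have : Real.sqrt (2 * π * ε) = 0 := Real.sqrt_eq_zero'.2 (by nlinarith [pi_pos])
    simp [gaussKer, gaussianPDFReal, Real.toNNReal_of_nonpos hε.le, this]

lemma gaussKer_nonneg (ε x : ℝ) : 0 ≤ gaussKer ε x := by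
  rw [gaussKer_eq_gaussianPDFReal]; exact gaussianPDFReal_nonneg _ _ _

lemma gaussKer_le_gaussKer_zero (ε x : ℝ) : gaussKer ε x ≤ gaussKer ε 0 := by
  rcases le_or_gt 0 ε with hε | hε
  · have hexp : exp (-x ^ 2 / (2 * ε)) ≤ 1 :=
      exp_le_one_iff.2 (div_nonpos_of_nonpos_of_nonneg (neg_nonpos.2 (sq_nonneg x)) (by positivity))
    simpa [gaussKer] using mul_le_of_le_one_right (by positivity) hexp
  · simp [gaussKer_eq_gaussianPDFReal, Real.toNNReal_of_nonpos hε.le]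

lemma integral_gaussianReal_eq_integral_gaussKer_mul {v : ℝ} (hv : 0 < v) (f : ℝ → ℝ) :
    ∫ x, f x ∂gaussianReal 0 v.toNNReal = ∫ x, gaussKer v x * f x := by
  rw [integral_gaussianReal_eq_integral_smul (by simpa using hv), gaussKer_eq_gaussianPDFReal]
  rfl

lemma integral_gaussKer_add {v : ℝ} (hv : 0 < v) (m : ℝ) : ∫ y, gaussKer v (y + m) = 1 := by
  rw [integral_add_right_eq_self (gaussKer v), gaussKer_eq_gaussianPDFReal,
    integral_gaussianPDFReal_eq_one _ (by simpa using hv)]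

-- Completing the square in `y`.
lemma gaussKer_add_mul_gaussKer {c d : ℝ} (hc : 0 < c) (hd : 0 < d) (z y : ℝ) :
    gaussKer c (z + y) * gaussKer d y =
      gaussKer (c + d) z * gaussKer (c * d / (c + d)) (y + d * z / (c + d)) := by
  have hcd : 0 < c + d := by positivity
  have hprefactor : 2 * π * c * (2 * π * d) =
      2 * π * (c + d) * (2 * π * (c * d / (c + d))) := by
    field_simp
  have hexponent : -(z + y) ^ 2 / (2 * c) + -y ^ 2 / (2 * d) =
      -z ^ 2 / (2 * (c + d)) + -(y + d * z / (c + d)) ^ 2 / (2 * (c * d / (c + d))) := by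
    field_simp; ring
  simp only [gaussKer]
  rw [mul_mul_mul_comm, ← mul_inv, ← Real.sqrt_mul (by positivity), ← exp_add, hprefactor,
    hexponent, Real.sqrt_mul (by positivity), mul_inv, exp_add, mul_mul_mul_comm]

lemma integral_gaussKer_add_mul_gaussKer {c d : ℝ} (hc : 0 < c) (hd : 0 < d) (z : ℝ) :
    ∫ y, gaussKer c (z + y) * gaussKer d y = gaussKer (c + d) z := by
  simp_rw [gaussKer_add_mul_gaussKer hc hd, integral_const_mul,
    integral_gaussKer_add (by positivity : 0 < c * d / (c + d)), mul_one]

lemma gaussKer_zero_mul_gaussKer_zero {a b : ℝ} (ha : 0 ≤ a) (hb : 0 ≤ b) :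
    gaussKer a 0 * gaussKer b 0 = (2 * π)⁻¹ * (a * b) ^ (-(1:ℝ)/2) := by
  simp only [gaussKer, ne_eq, OfNat.ofNat_ne_zero, not_false_eq_true, zero_pow, neg_zero,
    zero_div, exp_zero, mul_one]
  rw [← mul_inv, ← Real.sqrt_mul (by positivity),
    show 2 * π * a * (2 * π * b) = (2 * π) ^ 2 * (a * b) by ring,
    Real.sqrt_mul (by positivity), Real.sqrt_sq (by positivity), mul_inv, neg_div,
    rpow_neg (by positivity), Real.sqrt_eq_rpow]

lemma integral_gaussKer_mul_gaussKer_mul_gaussKer {a c e : ℝ} (ha : 0 < a) (hc : 0 < c)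
    (he : 0 < e) :
    ∫ x, gaussKer a x * (gaussKer c x * gaussKer e x) =
      (2 * π)⁻¹ * (a * c + a * e + c * e) ^ (-(1:ℝ)/2) := by
  have hce : 0 < c + e := by positivity
  have hproduct (x : ℝ) : gaussKer a x * (gaussKer c x * gaussKer e x) =
      gaussKer (c + e) 0 * (gaussKer a x * gaussKer (c * e / (c + e)) x) := by
    have := gaussKer_add_mul_gaussKer hc he 0 x
    simp only [zero_add, mul_zero, zero_div, add_zero] at this
    rw [this]; ring
  have hoverlap : ∫ x, gaussKer a x * gaussKer (c * e / (c + e)) x =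
      gaussKer (a + c * e / (c + e)) 0 := by
    simpa using integral_gaussKer_add_mul_gaussKer ha (by positivity : 0 < c * e / (c + e)) 0
  simp_rw [hproduct, integral_const_mul, hoverlap]
  rw [gaussKer_zero_mul_gaussKer_zero hce.le (by positivity : 0 ≤ a + c * e / (c + e))]
  congr 2
  field_simp

lemma integral_gaussKer_mul_gaussKer_add_prod_gaussianReal {a b δ δ' : ℝ} (ha : 0 < a)
    (hb : 0 < b) (hδ : 0 < δ) (hδ' : 0 < δ') :
    ∫ p, gaussKer δ p.1 * gaussKer δ' (p.1 + p.2)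
        ∂(gaussianReal 0 a.toNNReal).prod (gaussianReal 0 b.toNNReal) =
      (2 * π)⁻¹ * ((δ + a) * (δ' + b) + δ * a) ^ (-(1:ℝ)/2) := by
  have hintegrable : Integrable (fun p : ℝ × ℝ => gaussKer δ p.1 * gaussKer δ' (p.1 + p.2))
      ((gaussianReal 0 a.toNNReal).prod (gaussianReal 0 b.toNNReal)) := by
    refine .of_bound (by fun_prop : Continuous fun p : ℝ × ℝ => _).aestronglyMeasurable
      (gaussKer δ 0 * gaussKer δ' 0) (ae_of_all _ fun p => ?_)
    rw [norm_of_nonneg (mul_nonneg (gaussKer_nonneg _ _) (gaussKer_nonneg _ _))]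
    exact mul_le_mul (gaussKer_le_gaussKer_zero _ _) (gaussKer_le_gaussKer_zero _ _)
      (gaussKer_nonneg _ _) (gaussKer_nonneg _ _)
  have hinner (x : ℝ) : ∫ y, gaussKer δ x * gaussKer δ' (x + y) ∂gaussianReal 0 b.toNNReal =
      gaussKer δ x * gaussKer (δ' + b) x := by
    rw [integral_gaussianReal_eq_integral_gaussKer_mul hb,
      ← integral_gaussKer_add_mul_gaussKer hδ' hb x, ← integral_const_mul]
    congr 1; funext y; ring
  rw [integral_prod _ hintegrable]
  simp only [hinner]
  rw [integral_gaussianReal_eq_integral_gaussKer_mul ha,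
    integral_gaussKer_mul_gaussKer_mul_gaussKer ha hδ (by positivity)]
  congr 2
  ring

section BrownianIncrements

variable {Ω : Type*} [MeasurableSpace Ω] {P : Measure Ω} {B : ℝ → Ω → ℝ}

lemma IsStdBrownianMotion.measurable_sub (hB : IsStdBrownianMotion P B) (t s : ℝ) :
    Measurable fun ω => B t ω - B s ω :=
  (hB.2.2.1 t).sub (hB.2.2.1 s)

lemma IsStdBrownianMotion.indepFun_increments (hB : IsStdBrownianMotion P B) {u s r : ℝ}
    (hu : 0 ≤ u) (hus : u ≤ s) (hsr : s ≤ r) :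
    IndepFun (fun ω => B s ω - B u ω) (fun ω => B r ω - B s ω) P := by
  let t : ℕ → ℝ := fun n => if n = 0 then u else if n = 1 then s else r
  have ht : ∀ i, t i ≤ t (i + 1) := by
    intro i; rcases i with _ | _ | i <;> simp [t, hus, hsr]
  have hindep := hB.2.2.2.1 2 t (by simpa [t] using hu) ht
  simpa [t] using hindep.indepFun (i := 0) (j := 1) (by decide)

lemma IsStdBrownianMotion.map_increments [IsFiniteMeasure P] (hB : IsStdBrownianMotion P B)
    {u s r : ℝ} (hu : 0 ≤ u) (hus : u ≤ s) (hsr : s ≤ r) :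
    P.map (fun ω => (B r ω - B s ω, B s ω - B u ω)) =
      (gaussianReal 0 (r - s).toNNReal).prod (gaussianReal 0 (s - u).toNNReal) := by
  rw [(hB.indepFun_increments hu hus hsr).symm.map_prod_eq_prod_map_map
    (hB.measurable_sub r s).aemeasurable (hB.measurable_sub s u).aemeasurable,
    hB.2.2.2.2 s r (hu.trans hus) hsr, hB.2.2.2.2 u s hu hus]

end BrownianIncrements

theorem stmt13 {Ω : Type*} [MeasurableSpace Ω] (P : Measure Ω) [IsProbabilityMeasure P]
    (B : ℝ → Ω → ℝ) (hB : IsStdBrownianMotion P B)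
    (u s r : ℝ) (hu : 0 ≤ u) (hus : u < s) (hsr : s < r)
    (δ δ' : ℝ) (hδ : 0 < δ) (hδ' : 0 < δ') :
    ∫ ω, gaussKer δ (B r ω - B s ω) * gaussKer δ' (B r ω - B u ω) ∂P
      = (2 * Real.pi)⁻¹ *
        ((δ + (r - s)) * (δ' + (s - u)) + δ * (r - s)) ^ (-(1:ℝ)/2) := by
  have hmeas : Measurable fun ω => (B r ω - B s ω, B s ω - B u ω) :=
    (hB.measurable_sub r s).prodMk (hB.measurable_sub s u)
  have hcont : Continuous fun p : ℝ × ℝ => gaussKer δ p.1 * gaussKer δ' (p.1 + p.2) := by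
    fun_prop
  calc ∫ ω, gaussKer δ (B r ω - B s ω) * gaussKer δ' (B r ω - B u ω) ∂P
      = ∫ ω, (fun p : ℝ × ℝ => gaussKer δ p.1 * gaussKer δ' (p.1 + p.2))
          (B r ω - B s ω, B s ω - B u ω) ∂P := by simp only [sub_add_sub_cancel]
    _ = ∫ p, gaussKer δ p.1 * gaussKer δ' (p.1 + p.2)
          ∂P.map (fun ω => (B r ω - B s ω, B s ω - B u ω)) :=
        (integral_map hmeas.aemeasurable hcont.aestronglyMeasurable).symm
    _ = _ := by
        rw [hB.map_increments hu hus.le hsr.le,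
          integral_gaussKer_mul_gaussKer_add_prod_gaussianReal (by linarith) (by linarith) hδ hδ']
end
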